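/- The Busemann volume is invariant under projective automorphisms: if Ω ⊆ ℝⁿ is bounded, open and convex and g ∈ GL(n+1,ℝ) satisfies g(C(Ω)) = C(Ω), then for every Borel set A ⊆ Ω one has μ_Ω(g·A) = μ_Ω(A), where g·A is the image of A under the induced map of Ω. -/

import Mathlib

open Set MeasureTheory
open scoped ENNReal Classical

noncomputable section

/-- The parameter at which the ray from `x` in direction `v` exits `Ω`:
`x + (rayParam Ω x v) • v` is the point where this ray meets `∂Ω`. -/
def rayParam {n : ℕ} (Ω : Set (EuclideanSpace ℝ (Fin n)))
    (x v : EuclideanSpace ℝ (Fin n)) : ℝ :=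
  sSup {t : ℝ | 0 ≤ t ∧ x + t • v ∈ closure Ω}

/-- The Hilbert--Finsler norm `‖v‖ₓ^Ω = (1/2)(1/|x-p⁻| + 1/|x-p⁺|)|v|`, where
`p⁺` (resp. `p⁻`) is the point where the ray from `x` in the direction `v`
(resp. `-v`) meets `∂Ω`. -/
def finslerNorm {n : ℕ} (Ω : Set (EuclideanSpace ℝ (Fin n)))
    (x v : EuclideanSpace ℝ (Fin n)) : ℝ :=
  if v = 0 then 0
  else
    let pPlus := x + rayParam Ω x v • v
    let pMinus := x + rayParam Ω x (-v) • (-v)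
    (1 / 2) * (1 / dist x pMinus + 1 / dist x pPlus) * ‖v‖

/-- Lebesgue measure on `ℝⁿ` normalized so that the Euclidean unit ball has measure 1. -/
def normVol (n : ℕ) : Measure (EuclideanSpace ℝ (Fin n)) :=
  (volume (Metric.ball (0 : EuclideanSpace ℝ (Fin n)) 1))⁻¹ • volume

/-- The Busemann (Hilbert) volume: `μ_Ω(A) = ∫_A Vol(Bₓ(1))⁻¹ dVol(x)`, where
`Bₓ(1)` is the unit ball of the Hilbert--Finsler norm at `x`. -/
def busemannVolume {n : ℕ} (Ω A : Set (EuclideanSpace ℝ (Fin n))) : ℝ≥0∞ :=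
  ∫⁻ x in A, (normVol n {v : EuclideanSpace ℝ (Fin n) | finslerNorm Ω x v < 1})⁻¹ ∂(normVol n)

/-- The cone `C(Ω) = {t•(1,x) : x ∈ Ω, t > 0} ⊆ ℝ × ℝⁿ` over `Ω`. -/
def projCone {n : ℕ} (Ω : Set (EuclideanSpace ℝ (Fin n))) :
    Set (ℝ × EuclideanSpace ℝ (Fin n)) :=
  {p | ∃ x ∈ Ω, ∃ t : ℝ, 0 < t ∧ p = (t, t • x)}


/-!
The induced map `projMap g` acts on every line as a fractional linear map: with
`a = (g (1, x)).1` and `l = (g (0, v)).1`, it sends `x + t • v` to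
`projMap g x + (t a / (a + t l)) • D v`, where `D` is its differential at `x`. Since `g` preserves
the cone, `projMap g` maps `closure Ω` into itself with inverse `projMap g⁻¹`, so it sends the exit
point of the ray from `x` in direction `v` to the exit point of the ray from `projMap g x` in
direction `D v`, and the exit parameter `t` becomes `t a / (a + t l)`. Its reciprocal becomes
`1 / t + l / a`, and the shifts `± l / a` of the two opposite directions cancel in the
Hilbert–Finsler norm. So `D` is an isometry between the Finsler norms at `x` and `projMap g x`,
the Finsler unit ball at `projMap g x` is the image under `D` of the one at `x`, the density
`Vol(Bₓ(1))⁻¹` is multiplied by `|det D|⁻¹`, and the change of variables formula concludes.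
-/

section ProjectiveMap

variable {E : Type*} [AddCommGroup E] [Module ℝ E]

/-- The map `x ↦ g·x` induced on affine coordinates `x ↦ [1 : x]` of the projective space. -/
def projMap (g : (ℝ × E) ≃ₗ[ℝ] ℝ × E) (x : E) : E :=
  ((g (1, x)).1)⁻¹ • (g (1, x)).2

def projMapDeriv (g : (ℝ × E) ≃ₗ[ℝ] ℝ × E) (x : E) : E →ₗ[ℝ] E :=
  ((g (1, x)).1)⁻¹ •
    (LinearMap.snd ℝ ℝ E ∘ₗ g.toLinearMap ∘ₗ LinearMap.inr ℝ ℝ E -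
      (LinearMap.fst ℝ ℝ E ∘ₗ g.toLinearMap ∘ₗ LinearMap.inr ℝ ℝ E).smulRight (projMap g x))

variable {g : (ℝ × E) ≃ₗ[ℝ] ℝ × E}

lemma projMap_eq_of_apply_one {x y : E} {t : ℝ} (ht : t ≠ 0) (h : g (1, x) = (t, t • y)) :
    projMap g x = y := by
  simp [projMap, h, smul_smul, ht]

lemma projMapDeriv_apply (x v : E) :
    projMapDeriv g x v = ((g (1, x)).1)⁻¹ • ((g (0, v)).2 - (g (0, v)).1 • projMap g x) := by
  simp [projMapDeriv]

lemma apply_one_add_smul (x v : E) (τ : ℝ) : g (1, x + τ • v) = g (1, x) + τ • g (0, v) := by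
  rw [← map_smul, ← map_add]
  simp

lemma projMap_add_smul {x : E} (v : E) {τ : ℝ} (ha : (g (1, x)).1 ≠ 0)
    (hτ : (g (1, x)).1 + τ * (g (0, v)).1 ≠ 0) :
    projMap g (x + τ • v) = projMap g x +
      (τ * (g (1, x)).1 / ((g (1, x)).1 + τ * (g (0, v)).1)) • projMapDeriv g x v := by
  simp only [projMap, apply_one_add_smul, projMapDeriv_apply, Prod.fst_add, Prod.snd_add,
    Prod.smul_fst, Prod.smul_snd, smul_eq_mul]
  match_scalars <;> field_simp
  ring

lemma symm_apply_one_projMap {x : E} (ha : (g (1, x)).1 ≠ 0) :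
    g.symm (1, projMap g x) = ((g (1, x)).1)⁻¹ • (1, x) := by
  rw [LinearEquiv.symm_apply_eq, map_smul]
  ext <;> simp [projMap, ha]

lemma projMap_symm_projMap {x : E} (ha : (g (1, x)).1 ≠ 0) :
    projMap g.symm (projMap g x) = x := by
  rw [projMap, symm_apply_one_projMap ha]
  simp [smul_smul, ha]

lemma symm_apply_zero_projMapDeriv {x : E} (ha : (g (1, x)).1 ≠ 0) (v : E) :
    g.symm (0, projMapDeriv g x v) =
      ((g (1, x)).1)⁻¹ • (0, v) - ((g (0, v)).1 * ((g (1, x)).1)⁻¹ ^ 2) • (1, x) := by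
  rw [LinearEquiv.symm_apply_eq, map_sub, map_smul, map_smul]
  ext
  · simp only [Prod.fst_sub, Prod.smul_fst, smul_eq_mul]
    field_simp
    ring
  · simp only [projMapDeriv_apply, projMap, Prod.snd_sub, Prod.smul_snd]
    match_scalars <;> field_simp

lemma projMapDeriv_symm_projMapDeriv {x : E} (ha : (g (1, x)).1 ≠ 0) (v : E) :
    projMapDeriv g.symm (projMap g x) (projMapDeriv g x v) = v := by
  rw [projMapDeriv_apply, projMap_symm_projMap ha, symm_apply_one_projMap ha,
    symm_apply_zero_projMapDeriv ha]
  simp only [Prod.fst_sub, Prod.snd_sub, Prod.smul_fst, Prod.smul_snd, smul_eq_mul]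
  match_scalars <;> field_simp
  ring

lemma projMapDeriv_projMapDeriv_symm {x : E} (ha : (g (1, x)).1 ≠ 0) (u : E) :
    projMapDeriv g x (projMapDeriv g.symm (projMap g x) u) = u := by
  have ha' : (g.symm (1, projMap g x)).1 ≠ 0 := by simp [symm_apply_one_projMap ha, ha]
  simpa [projMap_symm_projMap ha] using projMapDeriv_symm_projMapDeriv (g := g.symm) ha' u

lemma projMapDeriv_ne_zero {x v : E} (ha : (g (1, x)).1 ≠ 0) (hv : v ≠ 0) :
    projMapDeriv g x v ≠ 0 := fun h =>
  hv (by simpa [h] using (projMapDeriv_symm_projMapDeriv ha v).symm)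

lemma det_projMapDeriv_ne_zero [Module.Free ℝ E] [Module.Finite ℝ E] {x : E}
    (ha : (g (1, x)).1 ≠ 0) : LinearMap.det (projMapDeriv g x) ≠ 0 := by
  have hcomp : projMapDeriv g x ∘ₗ projMapDeriv g.symm (projMap g x) = LinearMap.id :=
    LinearMap.ext (projMapDeriv_projMapDeriv_symm ha)
  have hdet := congrArg LinearMap.det hcomp
  rw [LinearMap.det_comp, LinearMap.det_id] at hdet
  exact left_ne_zero_of_mul_eq_one hdet

end ProjectiveMap

lemma hasFDerivAt_projMap {E : Type*} [NormedAddCommGroup E] [NormedSpace ℝ E]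
    [FiniteDimensional ℝ E] {g : (ℝ × E) ≃ₗ[ℝ] ℝ × E} {x : E} (ha : (g (1, x)).1 ≠ 0) :
    HasFDerivAt (projMap g) (projMapDeriv g x).toContinuousLinearMap x := by
  have hline : HasFDerivAt (fun y : E => g (1, y))
      ((g.toContinuousLinearEquiv : (ℝ × E) →L[ℝ] ℝ × E).comp
        ((0 : E →L[ℝ] ℝ).prod (ContinuousLinearMap.id ℝ E))) x :=
    g.toContinuousLinearEquiv.hasFDerivAt.comp x ((hasFDerivAt_const 1 x).prodMk (hasFDerivAt_id x))
  have hquot := ((hasFDerivAt_inv ha).comp x (hasFDerivAt_fst.comp x hline)).smul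
    (hasFDerivAt_snd.comp x hline)
  refine hquot.congr_fderiv (ContinuousLinearMap.ext fun w => ?_)
  simp [projMapDeriv_apply, projMap]
  match_scalars <;> field_simp

section Cone

variable {n : ℕ} {Ω : Set (EuclideanSpace ℝ (Fin n))}
  {g : (ℝ × EuclideanSpace ℝ (Fin n)) ≃ₗ[ℝ] ℝ × EuclideanSpace ℝ (Fin n)}

lemma image_symm_projCone (hg : g '' projCone Ω = projCone Ω) :
    g.symm '' projCone Ω = projCone Ω := by
  rw [g.image_symm_eq_preimage]
  nth_rw 1 [← hg]
  exact g.injective.preimage_image _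

lemma closure_projCone_subset {M : ℝ} (hM : Ω ⊆ Metric.closedBall 0 M) :
    closure (projCone Ω) ⊆ {p | 0 ≤ p.1 ∧ ‖p.2‖ ≤ M * p.1} := by
  refine closure_minimal ?_ ((isClosed_le continuous_const continuous_fst).inter
    (isClosed_le continuous_snd.norm (continuous_const.mul continuous_fst)))
  rintro _ ⟨y, hy, t, ht, rfl⟩
  have hyM : ‖y‖ ≤ M := mem_closedBall_zero_iff.1 (hM hy)
  refine ⟨ht.le, ?_⟩
  rw [norm_smul, Real.norm_of_nonneg ht.le]
  nlinarith

lemma fst_pos_of_mem_closure_projCone (hbd : Bornology.IsBounded Ω)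
    {p : ℝ × EuclideanSpace ℝ (Fin n)} (hp : p ∈ closure (projCone Ω)) (hp0 : p ≠ 0) :
    0 < p.1 := by
  obtain ⟨M, hM⟩ := hbd.subset_closedBall 0
  obtain ⟨h1, h2⟩ := closure_projCone_subset hM hp
  refine h1.lt_of_ne fun h => hp0 (Prod.ext h.symm ?_)
  rw [← h, mul_zero] at h2
  exact norm_le_zero_iff.1 h2

lemma inv_smul_snd_mem_closure {p : ℝ × EuclideanSpace ℝ (Fin n)}
    (hp : p ∈ closure (projCone Ω)) (h1 : p.1 ≠ 0) : p.1⁻¹ • p.2 ∈ closure Ω := by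
  have hcont : ContinuousAt (fun q : ℝ × EuclideanSpace ℝ (Fin n) => q.1⁻¹ • q.2) p :=
    (continuousAt_fst.inv₀ h1).smul continuousAt_snd
  refine closure_mono ?_ (hcont.continuousWithinAt.mem_closure_image hp)
  rintro _ ⟨_, ⟨y, hy, t, ht, rfl⟩, rfl⟩
  simpa [smul_smul, ht.ne'] using hy

lemma apply_one_mem_closure_projCone (hg : g '' projCone Ω = projCone Ω)
    {x : EuclideanSpace ℝ (Fin n)} (hx : x ∈ closure Ω) : g (1, x) ∈ closure (projCone Ω) := by
  have hline : ((1 : ℝ), x) ∈ closure (projCone Ω) := by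
    refine closure_mono ?_ ((Continuous.prodMk_right (1 : ℝ)).continuousWithinAt.mem_closure_image hx)
    rintro _ ⟨y, hy, rfl⟩
    exact ⟨y, hy, 1, one_pos, by simp⟩
  rw [← hg]
  exact (LinearMap.continuous_of_finiteDimensional g.toLinearMap).continuousWithinAt.mem_closure_image hline

lemma fst_apply_one_pos (hbd : Bornology.IsBounded Ω) (hg : g '' projCone Ω = projCone Ω)
    {x : EuclideanSpace ℝ (Fin n)} (hx : x ∈ closure Ω) : 0 < (g (1, x)).1 :=
  fst_pos_of_mem_closure_projCone hbd (apply_one_mem_closure_projCone hg hx)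
    (by simp [g.map_eq_zero_iff])

lemma projMap_mem_closure (hbd : Bornology.IsBounded Ω) (hg : g '' projCone Ω = projCone Ω)
    {x : EuclideanSpace ℝ (Fin n)} (hx : x ∈ closure Ω) : projMap g x ∈ closure Ω :=
  inv_smul_snd_mem_closure (apply_one_mem_closure_projCone hg hx) (fst_apply_one_pos hbd hg hx).ne'

end Cone

section Rays

open Filter Topology

variable {n : ℕ} {Ω : Set (EuclideanSpace ℝ (Fin n))} {x v : EuclideanSpace ℝ (Fin n)}

lemma bddAbove_raySet (hbd : Bornology.IsBounded Ω) (hv : v ≠ 0) :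
    BddAbove {t : ℝ | 0 ≤ t ∧ x + t • v ∈ closure Ω} := by
  obtain ⟨R, hR⟩ := hbd.closure.subset_closedBall x
  refine ⟨R / ‖v‖, fun t ⟨ht, hxt⟩ => (le_div_iff₀ (norm_pos_iff.2 hv)).2 ?_⟩
  simpa [dist_self_add_left, norm_smul, Real.norm_of_nonneg ht] using hR hxt

lemma le_rayParam (hbd : Bornology.IsBounded Ω) (hv : v ≠ 0) {t : ℝ} (ht : 0 ≤ t)
    (hxt : x + t • v ∈ closure Ω) : t ≤ rayParam Ω x v :=
  le_csSup (bddAbove_raySet hbd hv) ⟨ht, hxt⟩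

lemma add_rayParam_smul_mem_closure (hbd : Bornology.IsBounded Ω) (hv : v ≠ 0)
    (hx : x ∈ closure Ω) : x + rayParam Ω x v • v ∈ closure Ω := by
  have hclosed : IsClosed {t : ℝ | 0 ≤ t ∧ x + t • v ∈ closure Ω} :=
    isClosed_Ici.inter (isClosed_closure.preimage (by fun_prop))
  exact (hclosed.csSup_mem ⟨0, le_rfl, by simpa using hx⟩ (bddAbove_raySet hbd hv)).2

lemma rayParam_nonneg : 0 ≤ rayParam Ω x v :=
  Real.sSup_nonneg fun _ ht => ht.1

lemma rayParam_pos (hbd : Bornology.IsBounded Ω) (hop : IsOpen Ω) (hx : x ∈ Ω) (hv : v ≠ 0) :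
    0 < rayParam Ω x v := by
  have hline : Tendsto (fun t : ℝ => x + t • v) (𝓝 0) (𝓝 x) :=
    (by fun_prop : Continuous fun t : ℝ => x + t • v).tendsto' 0 x (by simp)
  obtain ⟨t, hxt, ht⟩ := ((hline.eventually (hop.mem_nhds hx)).filter_mono
    (nhdsWithin_le_nhds (s := Ioi 0))).and self_mem_nhdsWithin |>.exists
  exact ht.trans_le (le_rayParam hbd hv (le_of_lt ht) (subset_closure hxt))

lemma finslerNorm_of_ne_zero (hv : v ≠ 0) :
    finslerNorm Ω x v = ((rayParam Ω x (-v))⁻¹ + (rayParam Ω x v)⁻¹) / 2 := by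
  have hv' : ‖v‖ ≠ 0 := norm_ne_zero_iff.2 hv
  simp only [finslerNorm, if_neg hv, dist_self_add_right, norm_smul, norm_neg,
    Real.norm_of_nonneg rayParam_nonneg, one_div, mul_inv]
  field_simp

end Rays

section Invariance

variable {n : ℕ} {Ω : Set (EuclideanSpace ℝ (Fin n))}
  {g : (ℝ × EuclideanSpace ℝ (Fin n)) ≃ₗ[ℝ] ℝ × EuclideanSpace ℝ (Fin n)}
  {x v : EuclideanSpace ℝ (Fin n)}

lemma add_rayParam_mul_pos (hbd : Bornology.IsBounded Ω) (hg : g '' projCone Ω = projCone Ω)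
    (hx : x ∈ closure Ω) (hv : v ≠ 0) : 0 < (g (1, x)).1 + rayParam Ω x v * (g (0, v)).1 := by
  simpa [apply_one_add_smul] using
    fst_apply_one_pos hbd hg (add_rayParam_smul_mem_closure hbd hv hx)

lemma le_rayParam_projMap (hbd : Bornology.IsBounded Ω) (hg : g '' projCone Ω = projCone Ω)
    (hx : x ∈ closure Ω) (hv : v ≠ 0) :
    rayParam Ω x v * (g (1, x)).1 / ((g (1, x)).1 + rayParam Ω x v * (g (0, v)).1) ≤
      rayParam Ω (projMap g x) (projMapDeriv g x v) := by
  have ha := fst_apply_one_pos hbd hg hx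
  have hden := add_rayParam_mul_pos hbd hg hx hv
  refine le_rayParam hbd (projMapDeriv_ne_zero ha.ne' hv)
    (div_nonneg (mul_nonneg rayParam_nonneg ha.le) hden.le) ?_
  rw [← projMap_add_smul v ha.ne' hden.ne']
  exact projMap_mem_closure hbd hg (add_rayParam_smul_mem_closure hbd hv hx)

lemma rayParam_projMap (hbd : Bornology.IsBounded Ω) (hg : g '' projCone Ω = projCone Ω)
    (hx : x ∈ closure Ω) (hv : v ≠ 0) :
    rayParam Ω (projMap g x) (projMapDeriv g x v) =
      rayParam Ω x v * (g (1, x)).1 / ((g (1, x)).1 + rayParam Ω x v * (g (0, v)).1) := by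
  have ha := fst_apply_one_pos hbd hg hx
  have hden := add_rayParam_mul_pos hbd hg hx hv
  refine le_antisymm ?_ (le_rayParam_projMap hbd hg hx hv)
  -- the reverse bound is the same inequality for `g⁻¹` at `(projMap g x, projMapDeriv g x v)`
  have hg' := image_symm_projCone hg
  have hx' := projMap_mem_closure hbd hg hx
  have hv' := projMapDeriv_ne_zero ha.ne' hv
  have hden' := add_rayParam_mul_pos hbd hg' hx' hv'
  have hle' := le_rayParam_projMap hbd hg' hx' hv'
  rw [projMap_symm_projMap ha.ne', projMapDeriv_symm_projMapDeriv ha.ne'] at hle'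
  rw [symm_apply_one_projMap ha.ne', symm_apply_zero_projMapDeriv ha.ne'] at hden' hle'
  simp only [Prod.fst_sub, Prod.smul_fst, smul_eq_mul, mul_one, mul_zero, zero_sub] at hden' hle'
  set a := (g (1, x)).1
  set l := (g (0, v)).1
  set r := rayParam Ω (projMap g x) (projMapDeriv g x v)
  have hrl : r * l < a := by
    field_simp at hden'
    linarith
  have hra : r * a ≤ rayParam Ω x v * (a - r * l) := by
    rw [show r * a⁻¹ / (a⁻¹ + r * -(l * a⁻¹ ^ 2)) = r * a / (a - r * l) by field_simp; ring,
      div_le_iff₀ (by linarith)] at hle'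
    exact hle'
  rw [le_div_iff₀ hden]
  linarith

lemma finslerNorm_projMap (hbd : Bornology.IsBounded Ω) (hop : IsOpen Ω)
    (hg : g '' projCone Ω = projCone Ω) (hx : x ∈ Ω) (v : EuclideanSpace ℝ (Fin n)) :
    finslerNorm Ω (projMap g x) (projMapDeriv g x v) = finslerNorm Ω x v := by
  rcases eq_or_ne v 0 with rfl | hv
  · simp [finslerNorm]
  have hv' : -v ≠ 0 := neg_ne_zero.2 hv
  have ha := fst_apply_one_pos hbd hg (subset_closure hx)
  have ht := rayParam_pos hbd hop hx hv
  have ht' := rayParam_pos hbd hop hx hv'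
  have hden := add_rayParam_mul_pos hbd hg (subset_closure hx) hv
  have hden' := add_rayParam_mul_pos hbd hg (subset_closure hx) hv'
  have hl : (g (0, -v)).1 = -(g (0, v)).1 := by
    simpa using congrArg Prod.fst (map_neg g (0, v))
  rw [hl] at hden'
  rw [finslerNorm_of_ne_zero hv, finslerNorm_of_ne_zero (projMapDeriv_ne_zero ha.ne' hv),
    ← map_neg, rayParam_projMap hbd hg (subset_closure hx) hv,
    rayParam_projMap hbd hg (subset_closure hx) hv', hl]
  field_simp
  ring

lemma finslerBall_projMap (hbd : Bornology.IsBounded Ω) (hop : IsOpen Ω)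
    (hg : g '' projCone Ω = projCone Ω) (hx : x ∈ Ω) :
    {u | finslerNorm Ω (projMap g x) u < 1} = projMapDeriv g x '' {v | finslerNorm Ω x v < 1} := by
  have ha := (fst_apply_one_pos hbd hg (subset_closure hx)).ne'
  ext u
  constructor
  · intro hu
    refine ⟨projMapDeriv g.symm (projMap g x) u, ?_, projMapDeriv_projMapDeriv_symm ha u⟩
    rwa [mem_ofPred_eq, ← finslerNorm_projMap hbd hop hg hx, projMapDeriv_projMapDeriv_symm ha]
  · rintro ⟨v, hv, rfl⟩
    rwa [mem_ofPred_eq, finslerNorm_projMap hbd hop hg hx]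

end Invariance

instance isAddHaarMeasure_normVol (n : ℕ) : (normVol n).IsAddHaarMeasure :=
  .smul _ (ENNReal.inv_ne_zero.2 measure_ball_lt_top.ne)
    (ENNReal.inv_ne_top.2 (Metric.measure_ball_pos volume 0 one_pos).ne')

def busemannDensity {n : ℕ} (Ω : Set (EuclideanSpace ℝ (Fin n))) (x : EuclideanSpace ℝ (Fin n)) :
    ℝ≥0∞ :=
  (normVol n {v | finslerNorm Ω x v < 1})⁻¹

lemma busemannVolume_eq_setLIntegral {n : ℕ} (Ω A : Set (EuclideanSpace ℝ (Fin n))) :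
    busemannVolume Ω A = ∫⁻ x in A, busemannDensity Ω x ∂normVol n :=
  rfl

lemma ofReal_abs_det_mul_busemannDensity_projMap {n : ℕ} {Ω : Set (EuclideanSpace ℝ (Fin n))}
    {g : (ℝ × EuclideanSpace ℝ (Fin n)) ≃ₗ[ℝ] ℝ × EuclideanSpace ℝ (Fin n)}
    {x : EuclideanSpace ℝ (Fin n)} (hbd : Bornology.IsBounded Ω) (hop : IsOpen Ω)
    (hg : g '' projCone Ω = projCone Ω) (hx : x ∈ Ω) :
    ENNReal.ofReal |LinearMap.det (projMapDeriv g x)| * busemannDensity Ω (projMap g x) =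
      busemannDensity Ω x := by
  have hdet : ENNReal.ofReal |LinearMap.det (projMapDeriv g x)| ≠ 0 := by
    simpa using det_projMapDeriv_ne_zero (fst_apply_one_pos hbd hg (subset_closure hx)).ne'
  rw [busemannDensity, busemannDensity, finslerBall_projMap hbd hop hg hx,
    Measure.addHaar_image_linearMap, ENNReal.mul_inv (.inl hdet) (.inl ENNReal.ofReal_ne_top),
    ← mul_assoc, ENNReal.mul_inv_cancel hdet ENNReal.ofReal_ne_top, one_mul]

theorem busemannVolume_projective_invariance_general {n : ℕ}
    (Ω : Set (EuclideanSpace ℝ (Fin n)))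
    (hbd : Bornology.IsBounded Ω) (hop : IsOpen Ω)
    (g : (ℝ × EuclideanSpace ℝ (Fin n)) ≃ₗ[ℝ] ℝ × EuclideanSpace ℝ (Fin n))
    (hg : g '' projCone Ω = projCone Ω)
    (φ : EuclideanSpace ℝ (Fin n) → EuclideanSpace ℝ (Fin n))
    (hφ : ∀ x ∈ Ω, ∃ t : ℝ, 0 < t ∧ g (1, x) = (t, t • φ x))
    (A : Set (EuclideanSpace ℝ (Fin n))) (hA : A ⊆ Ω) (hAm : MeasurableSet A) :
    busemannVolume Ω (φ '' A) = busemannVolume Ω A := by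
  have ha : ∀ x ∈ A, (g (1, x)).1 ≠ 0 := fun x hx =>
    (fst_apply_one_pos hbd hg (subset_closure (hA hx))).ne'
  have hφA : φ '' A = projMap g '' A := image_congr fun x hx => by
    obtain ⟨t, ht, hgx⟩ := hφ x (hA hx)
    exact (projMap_eq_of_apply_one ht.ne' hgx).symm
  have hinj : InjOn (projMap g) A := fun x hx y hy hxy => by
    rw [← projMap_symm_projMap (ha x hx), hxy, projMap_symm_projMap (ha y hy)]
  rw [busemannVolume_eq_setLIntegral, busemannVolume_eq_setLIntegral, hφA,
    lintegral_image_eq_lintegral_abs_det_fderiv_mul (normVol n) hAm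
      (fun x hx => (hasFDerivAt_projMap (ha x hx)).hasFDerivWithinAt) hinj]
  exact setLIntegral_congr_fun hAm fun x hx =>
    ofReal_abs_det_mul_busemannDensity_projMap hbd hop hg (hA hx)

/-- The Busemann volume is invariant under projective automorphisms:
if `g ∈ GL(n+1,ℝ)` preserves the cone over `Ω` and `φ` is the induced map of `Ω`,
then `μ_Ω(φ '' A) = μ_Ω(A)` for every Borel `A ⊆ Ω`. -/
theorem busemannVolume_projective_invariance {n : ℕ} (hn : 1 ≤ n)
    (Ω : Set (EuclideanSpace ℝ (Fin n)))
    (hbd : Bornology.IsBounded Ω) (hop : IsOpen Ω) (hconv : Convex ℝ Ω)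
    (g : (ℝ × EuclideanSpace ℝ (Fin n)) ≃ₗ[ℝ] ℝ × EuclideanSpace ℝ (Fin n))
    (hg : g '' projCone Ω = projCone Ω)
    (φ : EuclideanSpace ℝ (Fin n) → EuclideanSpace ℝ (Fin n))
    (hφ : ∀ x ∈ Ω, ∃ t : ℝ, 0 < t ∧ g (1, x) = (t, t • φ x))
    (A : Set (EuclideanSpace ℝ (Fin n))) (hA : A ⊆ Ω) (hAm : MeasurableSet A) :
    busemannVolume Ω (φ '' A) = busemannVolume Ω A :=
  busemannVolume_projective_invariance_general Ω hbd hop g hg φ hφ A hA hAm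

end
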